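/- Let R be a UFD, p prime in R, and R' := R[x,y]/(xy - p) with the ℤ-grading in which x has grade 1, y has grade -1, and elements of R have grade 0. Then every homogeneous element of R' (with respect to this grading) is, up to a unit of R, a finite product of prime elements of R'. -/

import Mathlib

open MvPolynomial

/-- An element of `R[x,y]/(xy-p)` is homogeneous of grade `n` (for the ℤ-grading with `x` of
grade `1`, `y` of grade `-1`, and `R` in grade `0`) if it is the image of a polynomial all of
whose monomials `x^a y^b` satisfy `a - b = n`. -/
def IsHomog {R : Type*} [CommRing R] (p : R) (n : ℤ)
    (a : MvPolynomial (Fin 2) R ⧸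
      Ideal.span {(X 0 * X 1 - C p : MvPolynomial (Fin 2) R)}) : Prop :=
  ∃ f : MvPolynomial (Fin 2) R,
    (Ideal.Quotient.mk (Ideal.span {(X 0 * X 1 - C p : MvPolynomial (Fin 2) R)})) f = a ∧
    ∀ m ∈ f.support, (m 0 : ℤ) - (m 1 : ℤ) = n

namespace Stmt8Aux

open LaurentPolynomial

variable {D : Type*} [CommRing D]

/-- The map `D[x,y] → D[T,T⁻¹]`, `x ↦ T`, `y ↦ c T⁻¹`. -/
noncomputable def Phi (c : D) : MvPolynomial (Fin 2) D →+* LaurentPolynomial D :=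
  (aeval fun i : Fin 2 => if i = 0 then T 1 else LaurentPolynomial.C c * T (-1)).toRingHom

theorem Phi_C (c b : D) : Phi c (MvPolynomial.C b) = LaurentPolynomial.C b := by
  simp [Phi, LaurentPolynomial.algebraMap_apply]

theorem Phi_X0 (c : D) : Phi c (X 0) = T 1 := by simp [Phi]

theorem Phi_X1 (c : D) : Phi c (X 1) = LaurentPolynomial.C c * T (-1) := by simp [Phi]

theorem Phi_monomial (c : D) (m : Fin 2 →₀ ℕ) (a : D) :
    Phi c (monomial m a) = LaurentPolynomial.C (a * c ^ (m 1)) * T ((m 0 : ℤ) - (m 1 : ℤ)) := by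
  have h1 : (monomial m a : MvPolynomial (Fin 2) D) =
      MvPolynomial.C a * (X 0 ^ m 0 * X 1 ^ m 1) := by
    rw [monomial_eq, Finsupp.prod_fintype _ _ (fun i => pow_zero _), Fin.prod_univ_two]
  rw [h1, map_mul, map_mul, map_pow, map_pow, Phi_C, Phi_X0, Phi_X1, mul_pow, ← map_pow,
    T_pow, T_pow]
  have key : ∀ u v : D, ∀ s t : ℤ,
      LaurentPolynomial.C u * (T s * (LaurentPolynomial.C v * T t)) =
      LaurentPolynomial.C (u * v) * T (s + t) := by
    intro u v s t
    rw [map_mul, T_add]; ring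
  rw [key]
  congr 2
  push_cast
  ring

theorem span_le_ker (c : D) :
    Ideal.span {(X 0 * X 1 - MvPolynomial.C c : MvPolynomial (Fin 2) D)}
      ≤ RingHom.ker (Phi c) := by
  rw [Ideal.span_le, Set.singleton_subset_iff]
  have : Phi c (X 0 * X 1 - MvPolynomial.C c) = 0 := by
    rw [map_sub, map_mul, Phi_X0, Phi_X1, Phi_C]
    rw [mul_comm (LaurentPolynomial.C c) (T (-1)), ← mul_assoc, ← T_add]
    norm_num
  exact this

/-- Reduction of a "homogeneous of grade `k ≥ 0`" sum of monomials modulo `xy - c`. -/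
theorem red_pos (c : D) (s : Finset (Fin 2 →₀ ℕ)) (a : (Fin 2 →₀ ℕ) → D) (k : ℕ)
    (h : ∀ m ∈ s, m 0 = k + m 1) :
    (∑ m ∈ s, monomial m (a m)) - MvPolynomial.C (∑ m ∈ s, a m * c ^ (m 1)) * X 0 ^ k
      ∈ Ideal.span {(X 0 * X 1 - MvPolynomial.C c : MvPolynomial (Fin 2) D)} := by
  rw [map_sum, Finset.sum_mul, ← Finset.sum_sub_distrib]
  refine Ideal.sum_mem _ fun m hm => ?_
  have hm0 := h m hm
  have h1 : (monomial m (a m) : MvPolynomial (Fin 2) D) =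
      MvPolynomial.C (a m) * X 0 ^ k * (X 0 * X 1) ^ (m 1) := by
    rw [monomial_eq, Finsupp.prod_fintype _ _ (fun i => pow_zero _), Fin.prod_univ_two, hm0,
      pow_add, mul_pow]
    ring
  refine Ideal.mem_span_singleton.2 ?_
  obtain ⟨t, ht⟩ := sub_dvd_pow_sub_pow (X 0 * X 1 : MvPolynomial (Fin 2) D) (MvPolynomial.C c) (m 1)
  refine ⟨MvPolynomial.C (a m) * X 0 ^ k * t, ?_⟩
  rw [h1, map_mul, map_pow]
  linear_combination (MvPolynomial.C (a m) * X 0 ^ k) * ht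

/-- Reduction of a "homogeneous of grade `-k ≤ 0`" sum of monomials modulo `xy - c`. -/
theorem red_neg (c : D) (s : Finset (Fin 2 →₀ ℕ)) (a : (Fin 2 →₀ ℕ) → D) (k : ℕ)
    (h : ∀ m ∈ s, m 1 = k + m 0) :
    (∑ m ∈ s, monomial m (a m)) - MvPolynomial.C (∑ m ∈ s, a m * c ^ (m 0)) * X 1 ^ k
      ∈ Ideal.span {(X 0 * X 1 - MvPolynomial.C c : MvPolynomial (Fin 2) D)} := by
  rw [map_sum, Finset.sum_mul, ← Finset.sum_sub_distrib]
  refine Ideal.sum_mem _ fun m hm => ?_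
  have hm0 := h m hm
  have h1 : (monomial m (a m) : MvPolynomial (Fin 2) D) =
      MvPolynomial.C (a m) * X 1 ^ k * (X 0 * X 1) ^ (m 0) := by
    rw [monomial_eq, Finsupp.prod_fintype _ _ (fun i => pow_zero _), Fin.prod_univ_two, hm0,
      pow_add, mul_pow]
    ring
  refine Ideal.mem_span_singleton.2 ?_
  obtain ⟨t, ht⟩ := sub_dvd_pow_sub_pow (X 0 * X 1 : MvPolynomial (Fin 2) D) (MvPolynomial.C c) (m 0)
  refine ⟨MvPolynomial.C (a m) * X 1 ^ k * t, ?_⟩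
  rw [h1, map_mul, map_pow]
  linear_combination (MvPolynomial.C (a m) * X 1 ^ k) * ht

theorem ker_Phi [IsDomain D] (c : D) (hc : c ≠ 0) :
    RingHom.ker (Phi c) =
      Ideal.span {(X 0 * X 1 - MvPolynomial.C c : MvPolynomial (Fin 2) D)} := by
  classical
  refine le_antisymm ?_ (span_le_ker c)
  intro f hf
  rw [RingHom.mem_ker] at hf
  set w : (Fin 2 →₀ ℕ) → ℤ := fun m => (m 0 : ℤ) - m 1 with hw
  -- the coefficientwise consequence of `Phi c f = 0`
  have key : ∀ k : ℤ,
      ∑ m ∈ f.support.filter (fun m => w m = k), coeff m f * c ^ (m 1) = 0 := by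
    intro k
    have h1 : (∑ m ∈ f.support,
        Finsupp.single (w m) (coeff m f * c ^ (m 1)) : ℤ →₀ D) = 0 := by
      have h1' : Phi c f = AddMonoidAlgebra.ofCoeff (∑ m ∈ f.support,
          Finsupp.single (w m) (coeff m f * c ^ (m 1)) : ℤ →₀ D) := by
        conv_lhs => rw [as_sum f]
        rw [map_sum, AddMonoidAlgebra.ofCoeff_sum]
        refine Finset.sum_congr rfl fun m _ => ?_
        rw [Phi_monomial]
        exact (single_eq_C_mul_T _ _).symm
      exact AddMonoidAlgebra.ofCoeff_injective (h1'.symm.trans hf)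
    have h2 := congrArg (fun g : ℤ →₀ D => g k) h1
    simp only [Finsupp.finset_sum_apply, Finsupp.single_apply, Finsupp.coe_zero,
      Pi.zero_apply] at h2
    rw [Finset.sum_filter]
    simpa using h2
  -- decompose `f` into graded pieces
  have hdec : f = ∑ k ∈ f.support.image w,
      ∑ m ∈ f.support.filter (fun m => w m = k), monomial m (coeff m f) := by
    rw [Finset.sum_fiberwise_of_maps_to (fun m hm => Finset.mem_image_of_mem w hm), ← as_sum]
  rw [hdec]
  refine Ideal.sum_mem _ fun k _ => ?_
  rcases le_or_gt 0 k with hk | hk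
  · have h := red_pos c (f.support.filter (fun m => w m = k)) (fun m => coeff m f) k.toNat
      (fun m hm => ?_)
    · rw [key k, map_zero, zero_mul, sub_zero] at h
      exact h
    · have := (Finset.mem_filter.1 hm).2
      have hkk : (k.toNat : ℤ) = k := Int.toNat_of_nonneg hk
      simp only [hw] at this
      omega
  · have h := red_neg c (f.support.filter (fun m => w m = k)) (fun m => coeff m f) (-k).toNat
      (fun m hm => ?_)
    · have hz : (∑ m ∈ f.support.filter (fun m => w m = k),
          coeff m f * c ^ (m 0)) = 0 := by
        have h2 : (∑ m ∈ f.support.filter (fun m => w m = k),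
            coeff m f * c ^ (m 0)) * c ^ (-k).toNat = 0 := by
          rw [Finset.sum_mul, ← key k]
          refine Finset.sum_congr rfl fun m hm => ?_
          have := (Finset.mem_filter.1 hm).2
          simp only [hw] at this
          have hm1 : m 1 = (-k).toNat + m 0 := by omega
          rw [hm1, pow_add]
          ring
        rcases mul_eq_zero.1 h2 with h3 | h3
        · exact h3
        · exact absurd h3 (pow_ne_zero _ hc)
      rw [hz, map_zero, zero_mul, sub_zero] at h
      exact h
    · have := (Finset.mem_filter.1 hm).2
      simp only [hw] at this
      omega


/-- The map `D[x,y] → D[y]`, `x ↦ 0`, `y ↦ Y`. -/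
noncomputable def ev : MvPolynomial (Fin 2) D →+* Polynomial D :=
  (aeval fun i : Fin 2 => if i = 0 then 0 else Polynomial.X).toRingHom

theorem ev_monomial (m : Fin 2 →₀ ℕ) (a : D) :
    ev (monomial m a) = if m 0 = 0 then Polynomial.C a * Polynomial.X ^ (m 1) else 0 := by
  have h1 : (monomial m a : MvPolynomial (Fin 2) D) =
      MvPolynomial.C a * (X 0 ^ m 0 * X 1 ^ m 1) := by
    rw [monomial_eq, Finsupp.prod_fintype _ _ (fun i => pow_zero _), Fin.prod_univ_two]
  have hC : ∀ b : D, ev (MvPolynomial.C b) = Polynomial.C b := by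
    intro b; simp [ev, Polynomial.algebraMap_eq]
  have hX0 : ev (X 0 : MvPolynomial (Fin 2) D) = 0 := by simp [ev]
  have hX1 : ev (X 1 : MvPolynomial (Fin 2) D) = Polynomial.X := by simp [ev]
  rw [h1, map_mul, map_mul, map_pow, map_pow, hC, hX0, hX1]
  rcases Nat.eq_zero_or_pos (m 0) with h | h
  · simp [h]
  · rw [zero_pow (Nat.pos_iff_ne_zero.1 h), if_neg (Nat.pos_iff_ne_zero.1 h)]
    ring

theorem eq_single_iff (m : Fin 2 →₀ ℕ) (k : ℕ) :
    m = Finsupp.single 1 k ↔ m 0 = 0 ∧ m 1 = k := by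
  constructor
  · rintro rfl
    simp [Finsupp.single_apply]
  · rintro ⟨h0, h1⟩
    ext i
    fin_cases i <;> simp [Finsupp.single_apply, h0, h1]

theorem ker_ev : RingHom.ker (ev : MvPolynomial (Fin 2) D →+* Polynomial D)
    = Ideal.span {(X 0 : MvPolynomial (Fin 2) D)} := by
  classical
  ext f
  simp only [RingHom.mem_ker]
  constructor
  · intro hf
    have hcoeff : ∀ k : ℕ, coeff (Finsupp.single 1 k) f = 0 := by
      intro k
      have h1 : ev f = ∑ m ∈ f.support,
          if m 0 = 0 then Polynomial.C (coeff m f) * Polynomial.X ^ (m 1) else 0 := by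
        conv_lhs => rw [as_sum f]
        rw [map_sum]
        exact Finset.sum_congr rfl fun m _ => ev_monomial m _
      have h2 := congrArg (fun g : Polynomial D => g.coeff k) (h1.symm.trans hf)
      simp only [Polynomial.finset_sum_coeff, Polynomial.coeff_zero, apply_ite
        (fun g : Polynomial D => g.coeff k), Polynomial.coeff_C_mul,
        Polynomial.coeff_X_pow] at h2
      have h3 : ∀ m ∈ f.support,
          (if m 0 = 0 then coeff m f * if k = m 1 then (1:D) else 0 else 0)
          = if m = Finsupp.single 1 k then coeff m f else 0 := by
        intro m _
        by_cases hm : m = Finsupp.single 1 k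
        · rcases (eq_single_iff m k).1 hm with ⟨h0, h1'⟩
          simp [h0, h1', hm]
        · rw [if_neg hm]
          rcases Nat.eq_zero_or_pos (m 0) with h0 | h0
          · have : ¬ (k = m 1) := fun hk => hm ((eq_single_iff m k).2 ⟨h0, hk.symm⟩)
            simp [h0, this]
          · simp [Nat.pos_iff_ne_zero.1 h0]
      rw [Finset.sum_congr rfl h3, Finset.sum_ite_eq' f.support (Finsupp.single 1 k)
        (fun m => coeff m f)] at h2
      by_cases hmem : Finsupp.single 1 k ∈ f.support
      · rw [if_pos hmem] at h2; exact h2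
      · exact notMem_support_iff.1 hmem
    rw [as_sum f]
    refine Ideal.sum_mem _ fun m hm => ?_
    rcases Nat.eq_zero_or_pos (m 0) with h0 | h0
    · have : m = Finsupp.single 1 (m 1) := (eq_single_iff m (m 1)).2 ⟨h0, rfl⟩
      rw [this, hcoeff (m 1), map_zero]
      exact Ideal.zero_mem _
    · exact Ideal.mem_span_singleton.2 ((X_dvd_monomial).2 (Or.inr (Nat.pos_iff_ne_zero.1 h0)))
  · intro hf
    obtain ⟨g, hg⟩ := Ideal.mem_span_singleton.1 hf
    rw [hg, map_mul]
    have hX0 : ev (X 0 : MvPolynomial (Fin 2) D) = 0 := by simp [ev]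
    rw [hX0, zero_mul]


section
variable {R : Type*} [CommRing R]

theorem ker_comp (q : R) {E : Type*} [CommRing E]
    (ψ : MvPolynomial (Fin 2) (R ⧸ Ideal.span {q}) →+* E) (g₀ : MvPolynomial (Fin 2) R)
    (hker : RingHom.ker ψ = Ideal.span
      {MvPolynomial.map (Ideal.Quotient.mk (Ideal.span {q})) g₀}) :
    RingHom.ker (ψ.comp (MvPolynomial.map (Ideal.Quotient.mk (Ideal.span {q}))))
      = Ideal.span {MvPolynomial.C q, g₀} := by
  ext f
  constructor
  · intro hf
    have h1 : MvPolynomial.map (Ideal.Quotient.mk (Ideal.span {q})) f ∈ RingHom.ker ψ := hf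
    rw [hker, Ideal.mem_span_singleton] at h1
    obtain ⟨g, hg⟩ := h1
    obtain ⟨g₁, rfl⟩ := MvPolynomial.map_surjective _ Ideal.Quotient.mk_surjective g
    have h2 : f - g₀ * g₁ ∈ RingHom.ker
        (MvPolynomial.map (Ideal.Quotient.mk (Ideal.span {q})) :
          MvPolynomial (Fin 2) R →+* MvPolynomial (Fin 2) (R ⧸ Ideal.span {q})) := by
      rw [RingHom.mem_ker, map_sub, map_mul, ← hg, sub_self]
    rw [MvPolynomial.ker_map, Ideal.mk_ker, Ideal.map_span, Set.image_singleton] at h2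
    have h3 : f = (f - g₀ * g₁) + g₀ * g₁ := by ring
    rw [h3]
    refine Ideal.add_mem _
      (Ideal.span_mono (Set.singleton_subset_iff.2 (Set.mem_insert _ _)) h2)
      (Ideal.mul_mem_right _ _ (Ideal.subset_span (Set.mem_insert_of_mem _ rfl)))
  · intro hf
    have hle : Ideal.span {MvPolynomial.C q, g₀}
        ≤ RingHom.ker (ψ.comp (MvPolynomial.map (Ideal.Quotient.mk (Ideal.span {q})))) := by
      rw [Ideal.span_le]
      rintro z hz
      simp only [Set.mem_insert_iff, Set.mem_singleton_iff] at hz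
      rcases hz with rfl | rfl
      · simp only [SetLike.mem_coe, RingHom.mem_ker, RingHom.coe_comp, Function.comp_apply,
          MvPolynomial.map_C]
        rw [show (Ideal.Quotient.mk (Ideal.span {q})) q = 0 from
          Ideal.Quotient.eq_zero_iff_mem.2 (Ideal.subset_span (Set.mem_singleton q)),
          map_zero, map_zero]
      · have hmem : MvPolynomial.map (Ideal.Quotient.mk (Ideal.span {q})) z ∈ RingHom.ker ψ := by
          rw [hker]; exact Ideal.subset_span rfl
        exact hmem
    exact hle hf

theorem isPrime_span_Cp_X0 [IsDomain R] (p : R) (hp : Prime p) :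
    (Ideal.span {MvPolynomial.C p, (X 0 : MvPolynomial (Fin 2) R)}).IsPrime := by
  haveI : (Ideal.span {p}).IsPrime := (Ideal.span_singleton_prime hp.ne_zero).2 hp
  have h := ker_comp p (ev : MvPolynomial (Fin 2) (R ⧸ Ideal.span {p}) →+* _) (X 0)
    (by rw [ker_ev, MvPolynomial.map_X])
  rw [← h]
  exact RingHom.ker_isPrime _

theorem isPrime_span_Cq_rel [IsDomain R] (p q : R) (hq : Prime q) (hqp : ¬ q ∣ p) :
    (Ideal.span {MvPolynomial.C q,
      (X 0 * X 1 - MvPolynomial.C p : MvPolynomial (Fin 2) R)}).IsPrime := by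
  haveI : (Ideal.span {q}).IsPrime := (Ideal.span_singleton_prime hq.ne_zero).2 hq
  set c : R ⧸ Ideal.span {q} := Ideal.Quotient.mk (Ideal.span {q}) p with hcdef
  have hc : c ≠ 0 := fun h =>
    hqp (Ideal.mem_span_singleton.1 (Ideal.Quotient.eq_zero_iff_mem.1 h))
  haveI : IsDomain (LaurentPolynomial (R ⧸ Ideal.span {q})) := NoZeroDivisors.to_isDomain _
  have h := ker_comp q (Phi c) (X 0 * X 1 - MvPolynomial.C p)
    (by rw [ker_Phi c hc]; congr 2; rw [map_sub, map_mul, MvPolynomial.map_X,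
      MvPolynomial.map_X, MvPolynomial.map_C])
  rw [← h]
  exact RingHom.ker_isPrime _

end


section
variable {R : Type*} [CommRing R] [IsDomain R] (p : R)

theorem mk_ne_zero_of_Phi (f : MvPolynomial (Fin 2) R)
    (hf : Phi p f ≠ 0) :
    Ideal.Quotient.mk (Ideal.span {(X 0 * X 1 - MvPolynomial.C p :
      MvPolynomial (Fin 2) R)}) f ≠ 0 := by
  intro h
  exact hf (span_le_ker p (Ideal.Quotient.eq_zero_iff_mem.1 h))

theorem mk_X0_ne_zero :
    Ideal.Quotient.mk (Ideal.span {(X 0 * X 1 - MvPolynomial.C p :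
      MvPolynomial (Fin 2) R)}) (X 0) ≠ 0 := by
  refine mk_ne_zero_of_Phi p _ ?_
  rw [Phi_X0]
  intro h2
  have h4 : (Finsupp.single (1 : ℤ) (1 : R) : ℤ →₀ R) = 0 := congrArg AddMonoidAlgebra.coeff h2
  exact one_ne_zero (Finsupp.single_eq_zero.1 h4)

theorem mk_X1_ne_zero (hp0 : p ≠ 0) :
    Ideal.Quotient.mk (Ideal.span {(X 0 * X 1 - MvPolynomial.C p :
      MvPolynomial (Fin 2) R)}) (X 1) ≠ 0 := by
  refine mk_ne_zero_of_Phi p _ ?_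
  rw [Phi_X1]
  intro h2
  rw [show (LaurentPolynomial.C p * LaurentPolynomial.T (-1) : LaurentPolynomial R)
      = AddMonoidAlgebra.single (-1 : ℤ) p from (LaurentPolynomial.single_eq_C_mul_T p (-1)).symm] at h2
  have h4 : (Finsupp.single (-1 : ℤ) p : ℤ →₀ R) = 0 := congrArg AddMonoidAlgebra.coeff h2
  exact hp0 (Finsupp.single_eq_zero.1 h4)

theorem mk_C_ne_zero {b : R} (hb : b ≠ 0) :
    Ideal.Quotient.mk (Ideal.span {(X 0 * X 1 - MvPolynomial.C p :
      MvPolynomial (Fin 2) R)}) (MvPolynomial.C b) ≠ 0 := by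
  refine mk_ne_zero_of_Phi p _ ?_
  rw [Phi_C]
  intro h2
  have h3 : (LaurentPolynomial.C b : LaurentPolynomial R) = AddMonoidAlgebra.single (0 : ℤ) b := by
    rw [LaurentPolynomial.single_eq_C_mul_T, LaurentPolynomial.T_zero, mul_one]
  rw [h3] at h2
  have h4 : (Finsupp.single (0 : ℤ) b : ℤ →₀ R) = 0 := congrArg AddMonoidAlgebra.coeff h2
  exact hb (Finsupp.single_eq_zero.1 h4)

theorem mk_Cp_eq :
    Ideal.Quotient.mk (Ideal.span {(X 0 * X 1 - MvPolynomial.C p :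
      MvPolynomial (Fin 2) R)}) (MvPolynomial.C p)
    = Ideal.Quotient.mk _ (X 0) * Ideal.Quotient.mk _ (X 1) := by
  rw [← map_mul, Ideal.Quotient.eq]
  have : -(X 0 * X 1 - MvPolynomial.C p : MvPolynomial (Fin 2) R)
      = MvPolynomial.C p - X 0 * X 1 := by ring
  rw [← this]
  exact neg_mem (Ideal.subset_span rfl)

theorem prime_mk_X0 (hp : Prime p) :
    Prime (Ideal.Quotient.mk (Ideal.span {(X 0 * X 1 - MvPolynomial.C p :
      MvPolynomial (Fin 2) R)}) (X 0)) := by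
  classical
  set I : Ideal (MvPolynomial (Fin 2) R) :=
    Ideal.span {(X 0 * X 1 - MvPolynomial.C p : MvPolynomial (Fin 2) R)} with hI
  set mkI := Ideal.Quotient.mk I with hmkI
  have hxy := mk_Cp_eq p
  haveI hJ : (Ideal.span {MvPolynomial.C p, (X 0 : MvPolynomial (Fin 2) R)}).IsPrime :=
    isPrime_span_Cp_X0 p hp
  have hIJ : I ≤ Ideal.span {MvPolynomial.C p, (X 0 : MvPolynomial (Fin 2) R)} := by
    rw [hI, Ideal.span_le, Set.singleton_subset_iff]
    exact Ideal.sub_mem _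
      (Ideal.mul_mem_right _ _ (Ideal.subset_span (Set.mem_insert_of_mem _ rfl)))
      (Ideal.subset_span (Set.mem_insert _ _))
  haveI hmapP : (Ideal.map mkI (Ideal.span {MvPolynomial.C p,
      (X 0 : MvPolynomial (Fin 2) R)})).IsPrime :=
    Ideal.map_isPrime_of_surjective Ideal.Quotient.mk_surjective
      (by rw [Ideal.mk_ker]; exact hIJ)
  have heq : Ideal.map mkI (Ideal.span {MvPolynomial.C p, (X 0 : MvPolynomial (Fin 2) R)})
      = Ideal.span {mkI (X 0)} := by
    rw [Ideal.map_span, Set.image_insert_eq, Set.image_singleton]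
    refine le_antisymm (Ideal.span_le.2 ?_) (Ideal.span_le.2 ?_)
    · rintro z hz
      rcases hz with rfl | hz
      · show mkI (MvPolynomial.C p) ∈ _
        rw [hxy]
        exact Ideal.mul_mem_right _ _ (Ideal.subset_span rfl)
      · rcases hz with rfl
        exact Ideal.subset_span rfl
    · rintro z hz
      rcases hz with rfl
      exact Ideal.subset_span (Set.mem_insert_of_mem _ rfl)
  rw [heq] at hmapP
  exact (Ideal.span_singleton_prime (mk_X0_ne_zero p)).1 hmapP

theorem prime_mk_Cq (hp : Prime p) {q : R} (hq : Prime q) (hqp : ¬ q ∣ p) :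
    Prime (Ideal.Quotient.mk (Ideal.span {(X 0 * X 1 - MvPolynomial.C p :
      MvPolynomial (Fin 2) R)}) (MvPolynomial.C q)) := by
  classical
  set I : Ideal (MvPolynomial (Fin 2) R) :=
    Ideal.span {(X 0 * X 1 - MvPolynomial.C p : MvPolynomial (Fin 2) R)} with hI
  set mkI := Ideal.Quotient.mk I with hmkI
  haveI hJ : (Ideal.span {MvPolynomial.C q,
      (X 0 * X 1 - MvPolynomial.C p : MvPolynomial (Fin 2) R)}).IsPrime :=
    isPrime_span_Cq_rel p q hq hqp
  have hIJ : I ≤ Ideal.span {MvPolynomial.C q,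
      (X 0 * X 1 - MvPolynomial.C p : MvPolynomial (Fin 2) R)} := by
    rw [hI, Ideal.span_le, Set.singleton_subset_iff]
    exact Ideal.subset_span (Set.mem_insert_of_mem _ rfl)
  haveI hmapP : (Ideal.map mkI (Ideal.span {MvPolynomial.C q,
      (X 0 * X 1 - MvPolynomial.C p : MvPolynomial (Fin 2) R)})).IsPrime :=
    Ideal.map_isPrime_of_surjective Ideal.Quotient.mk_surjective
      (by rw [Ideal.mk_ker]; exact hIJ)
  have heq : Ideal.map mkI (Ideal.span {MvPolynomial.C q,
      (X 0 * X 1 - MvPolynomial.C p : MvPolynomial (Fin 2) R)})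
      = Ideal.span {mkI (MvPolynomial.C q)} := by
    rw [Ideal.map_span, Set.image_insert_eq, Set.image_singleton]
    refine le_antisymm (Ideal.span_le.2 ?_) (Ideal.span_le.2 ?_)
    · rintro z hz
      rcases hz with rfl | hz
      · exact Ideal.subset_span rfl
      · rcases hz with rfl
        show mkI (X 0 * X 1 - MvPolynomial.C p) ∈ _
        rw [show mkI (X 0 * X 1 - MvPolynomial.C p) = 0 from
          Ideal.Quotient.eq_zero_iff_mem.2 (Ideal.subset_span rfl)]
        exact Ideal.zero_mem _
    · rintro z hz
      rcases hz with rfl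
      exact Ideal.subset_span (Set.mem_insert _ _)
  rw [heq] at hmapP
  exact (Ideal.span_singleton_prime (mk_C_ne_zero p hq.ne_zero)).1 hmapP

theorem prime_mk_X1 (hp : Prime p) :
    Prime (Ideal.Quotient.mk (Ideal.span {(X 0 * X 1 - MvPolynomial.C p :
      MvPolynomial (Fin 2) R)}) (X 1)) := by
  classical
  set I : Ideal (MvPolynomial (Fin 2) R) :=
    Ideal.span {(X 0 * X 1 - MvPolynomial.C p : MvPolynomial (Fin 2) R)} with hI
  set σ : MvPolynomial (Fin 2) R ≃+* MvPolynomial (Fin 2) R :=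
    (renameEquiv R (Equiv.swap (0 : Fin 2) 1)).toRingEquiv with hσ
  have hσX0 : σ (X 0) = X 1 := by
    simp [hσ, renameEquiv_apply, rename_X, Equiv.swap_apply_left]
  have hσrel : σ (X 0 * X 1 - MvPolynomial.C p) = X 1 * X 0 - MvPolynomial.C p := by
    simp [hσ, renameEquiv_apply, rename_X, Equiv.swap_apply_left, Equiv.swap_apply_right]
  have hmap : I = Ideal.map (σ : MvPolynomial (Fin 2) R →+* MvPolynomial (Fin 2) R) I := by
    rw [hI, Ideal.map_span, Set.image_singleton]
    have : (σ : MvPolynomial (Fin 2) R →+* MvPolynomial (Fin 2) R)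
        (X 0 * X 1 - MvPolynomial.C p) = X 0 * X 1 - MvPolynomial.C p := by
      rw [show ((σ : MvPolynomial (Fin 2) R →+* MvPolynomial (Fin 2) R)
        (X 0 * X 1 - MvPolynomial.C p)) = σ (X 0 * X 1 - MvPolynomial.C p) from rfl, hσrel,
        mul_comm]
    rw [this]
  have hx := prime_mk_X0 p hp
  have hx2 := (MulEquiv.prime_iff (Ideal.quotientEquiv I I σ hmap).toMulEquiv).2 hx
  rw [show (Ideal.quotientEquiv I I σ hmap).toMulEquiv (Ideal.Quotient.mk I (X 0))
      = Ideal.Quotient.mk I (σ (X 0)) from Ideal.quotientEquiv_mk I I σ hmap (X 0), hσX0] at hx2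
  exact hx2

end


section
variable {R : Type*} [CommRing R] [IsDomain R]

theorem factor_multiset (p : R) (hp : Prime p) (s : Multiset R) (hs : ∀ t ∈ s, Prime t) :
    ∃ u : R, IsUnit u ∧ ∃ l : Multiset (MvPolynomial (Fin 2) R ⧸
      Ideal.span {(X 0 * X 1 - MvPolynomial.C p : MvPolynomial (Fin 2) R)}),
      (∀ z ∈ l, Prime z) ∧
      Ideal.Quotient.mk (Ideal.span {(X 0 * X 1 - MvPolynomial.C p : MvPolynomial (Fin 2) R)})
          (MvPolynomial.C s.prod)
        = Ideal.Quotient.mk (Ideal.span {(X 0 * X 1 - MvPolynomial.C p :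
            MvPolynomial (Fin 2) R)}) (MvPolynomial.C u) * l.prod := by
  classical
  induction s using Multiset.induction_on with
  | empty => exact ⟨1, isUnit_one, 0, by simp, by simp⟩
  | cons t s ih =>
    obtain ⟨u, hu, l, hl, heq⟩ := ih (fun z hz => hs z (Multiset.mem_cons_of_mem hz))
    have ht : Prime t := hs t (Multiset.mem_cons_self t s)
    by_cases hassoc : Associated p t
    · obtain ⟨v, hv⟩ := hassoc
      refine ⟨u * v, hu.mul v.isUnit,
        (Ideal.Quotient.mk _ (X 0)) ::ₘ (Ideal.Quotient.mk _ (X 1)) ::ₘ l, ?_, ?_⟩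
      · intro z hz
        rcases Multiset.mem_cons.1 hz with rfl | hz
        · exact prime_mk_X0 p hp
        · rcases Multiset.mem_cons.1 hz with rfl | hz
          · exact prime_mk_X1 p hp
          · exact hl z hz
      · rw [Multiset.prod_cons, Multiset.prod_cons, Multiset.prod_cons, ← hv]
        simp only [map_mul]
        rw [mk_Cp_eq p, heq]
        ring
    · have hqp : ¬ t ∣ p := fun hdvd =>
        hassoc ((ht.irreducible.associated_of_dvd hp.irreducible hdvd).symm)
      refine ⟨u, hu, (Ideal.Quotient.mk _ (MvPolynomial.C t)) ::ₘ l, ?_, ?_⟩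
      · intro z hz
        rcases Multiset.mem_cons.1 hz with rfl | hz
        · exact prime_mk_Cq p hp ht hqp
        · exact hl z hz
      · rw [Multiset.prod_cons, Multiset.prod_cons, map_mul, map_mul, heq]
        ring

end

end Stmt8Aux

/-- If `R` is a UFD and `p` prime, every nonzero homogeneous element of
`R' = R[x,y]/(xy-p)` is, up to a unit of `R`, a finite product of prime elements of `R'`. -/
theorem stmt8 (R : Type*) [CommRing R] [IsDomain R] [UniqueFactorizationMonoid R]
    (p : R) (hp : Prime p) (n : ℤ)
    (a : MvPolynomial (Fin 2) R ⧸
      Ideal.span {(X 0 * X 1 - C p : MvPolynomial (Fin 2) R)})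
    (ha : a ≠ 0) (hhom : IsHomog p n a) :
    ∃ (u : R) (_ : IsUnit u)
      (l : Multiset (MvPolynomial (Fin 2) R ⧸
        Ideal.span {(X 0 * X 1 - C p : MvPolynomial (Fin 2) R)})),
      (∀ q ∈ l, Prime q) ∧
      a = (Ideal.Quotient.mk (Ideal.span {(X 0 * X 1 - C p : MvPolynomial (Fin 2) R)}))
            (C u) * l.prod := by
  obtain ⟨f, hfa, hfm⟩ := hhom
  classical
  have key : ∃ (r : R) (e0 e1 : ℕ),
      a = Ideal.Quotient.mk (Ideal.span {(X 0 * X 1 - C p : MvPolynomial (Fin 2) R)}) (C r)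
        * (Ideal.Quotient.mk _ (X 0)) ^ e0 * (Ideal.Quotient.mk _ (X 1)) ^ e1 := by
    rcases le_or_gt 0 n with hn | hn
    · refine ⟨∑ m ∈ f.support, coeff m f * p ^ (m 1), n.toNat, 0, ?_⟩
      have hred := Stmt8Aux.red_pos p f.support (fun m => coeff m f) n.toNat (fun m hm => by
        have h1 := hfm m hm
        have h2 : (n.toNat : ℤ) = n := Int.toNat_of_nonneg hn
        omega)
      rw [← as_sum] at hred
      rw [← hfa, pow_zero, mul_one, ← map_pow, ← map_mul]
      exact Ideal.Quotient.eq.2 hred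
    · refine ⟨∑ m ∈ f.support, coeff m f * p ^ (m 0), 0, (-n).toNat, ?_⟩
      have hred := Stmt8Aux.red_neg p f.support (fun m => coeff m f) (-n).toNat (fun m hm => by
        have h1 := hfm m hm
        have h2 : ((-n).toNat : ℤ) = -n := Int.toNat_of_nonneg (by omega)
        omega)
      rw [← as_sum] at hred
      rw [← hfa, pow_zero, mul_one, ← map_pow, ← map_mul]
      exact Ideal.Quotient.eq.2 hred
  obtain ⟨r, e0, e1, hare⟩ := key
  have hr0 : r ≠ 0 := by
    rintro rfl
    apply ha
    rw [hare]
    simp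
  obtain ⟨s, hsp, hsassoc⟩ := UniqueFactorizationMonoid.exists_prime_factors r hr0
  obtain ⟨v, hv⟩ := hsassoc
  obtain ⟨u, hu, l, hl, heq⟩ := Stmt8Aux.factor_multiset p hp s hsp
  refine ⟨u * v, hu.mul v.isUnit,
    l + Multiset.replicate e0 (Ideal.Quotient.mk _ (X 0))
      + Multiset.replicate e1 (Ideal.Quotient.mk _ (X 1)), ?_, ?_⟩
  · intro z hz
    rcases Multiset.mem_add.1 hz with hz | hz
    · rcases Multiset.mem_add.1 hz with hz | hz
      · exact hl z hz
      · rw [Multiset.eq_of_mem_replicate hz]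
        exact Stmt8Aux.prime_mk_X0 p hp
    · rw [Multiset.eq_of_mem_replicate hz]
      exact Stmt8Aux.prime_mk_X1 p hp
  · rw [Multiset.prod_add, Multiset.prod_add, Multiset.prod_replicate, Multiset.prod_replicate]
    simp only [map_mul] at hare ⊢
    rw [hare, ← hv]
    simp only [map_mul]
    rw [heq]
    ring
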